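/- On the region Ω = {x : r(x) > 0}, the integral curves of k are geodesics with affine parameter r and expansion 2/r, i.e. for each a one has k^b ∂k^a/∂x^b = 0, and the divergence is ∂k^a/∂x^a = 2/r (sum over a = 0,1,2,3). -/

import Mathlib

open scoped BigOperators

noncomputable section

/-- The Minkowski metric η = diag(−1,1,1,1) on ℝ⁴. -/
def eta (i j : Fin 4) : ℝ := if i = j then (if i = 0 then -1 else 1) else 0

/-- Minkowski inner product a·b = η_{ij} a^i b^j. -/
def mdot (a b : Fin 4 → ℝ) : ℝ := ∑ i, ∑ j, eta i j * a i * b j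

/-- Lowering an index with η : k_i = η_{ij} k^j. -/
def lo (a : Fin 4 → ℝ) (i : Fin 4) : ℝ := ∑ j, eta i j * a j

/-!
The retarded time solves `(x - z τ)·(x - z τ) = 0`, whose `τ`-derivative `2 r` does not vanish
on `Ω`, so by the implicit function theorem `∂_b u = -k_b`. As `w = x - z u` is null, `u` is
stationary along `w`, and `v^b ∂_b u = 1`. Hence `w` and `r = -v·w` are homogeneous of degree one
along `w` (`Dw w = w`, `Dr w = r`), and `∂_a w^a = 4 - v^a ∂_a u = 3`. For `k = w / r` this gives
`Dk w = 0`, the geodesic equation, and `∂_a k^a = (3 - Dr w / r) / r = 2 / r`.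
-/

open Topology Filter

theorem mdot_eq (a b : Fin 4 → ℝ) :
    mdot a b = -(a 0 * b 0) + a 1 * b 1 + a 2 * b 2 + a 3 * b 3 := by
  simp [mdot, eta, Fin.sum_univ_four]

theorem mdot_comm (a b : Fin 4 → ℝ) : mdot a b = mdot b a := by
  simp only [mdot_eq]; ring

theorem eq_zero_of_mdot_self_eq_zero_of_apply_zero {w : Fin 4 → ℝ} (hw : mdot w w = 0)
    (h0 : w 0 = 0) : w = 0 := by
  rw [mdot_eq, h0] at hw
  have h1 : w 1 = 0 := by nlinarith [sq_nonneg (w 1), sq_nonneg (w 2), sq_nonneg (w 3)]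
  have h2 : w 2 = 0 := by nlinarith [sq_nonneg (w 1), sq_nonneg (w 2), sq_nonneg (w 3)]
  have h3 : w 3 = 0 := by nlinarith [sq_nonneg (w 1), sq_nonneg (w 2), sq_nonneg (w 3)]
  ext i; fin_cases i <;> assumption

def minkowskiForm : (Fin 4 → ℝ) →L[ℝ] (Fin 4 → ℝ) →L[ℝ] ℝ :=
  LinearMap.toContinuousLinearMap <| LinearMap.toContinuousLinearMap.toLinearMap ∘ₗ
    LinearMap.mk₂ ℝ mdot (fun _ _ _ => by simp only [mdot_eq, Pi.add_apply]; ring)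
      (fun _ _ _ => by simp only [mdot_eq, Pi.smul_apply, smul_eq_mul]; ring)
      (fun _ _ _ => by simp only [mdot_eq, Pi.add_apply]; ring)
      (fun _ _ _ => by simp only [mdot_eq, Pi.smul_apply, smul_eq_mul]; ring)

@[simp] theorem minkowskiForm_apply (a b : Fin 4 → ℝ) : minkowskiForm a b = mdot a b := rfl

theorem HasStrictFDerivAt.mdot {E : Type*} [NormedAddCommGroup E] [NormedSpace ℝ E]
    {f g : E → Fin 4 → ℝ} {f' g' : E →L[ℝ] Fin 4 → ℝ} {x : E}
    (hf : HasStrictFDerivAt f f' x) (hg : HasStrictFDerivAt g g' x) :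
    HasStrictFDerivAt (fun y => mdot (f y) (g y))
      ((minkowskiForm (f x)).comp g' + (minkowskiForm (g x)).comp f') x :=
  (minkowskiForm.hasStrictFDerivAt_of_bilinear hf hg).congr_fderiv <| by
    ext h; simp [mdot_comm (f' h)]

theorem HasStrictFDerivAt.hasStrictFDerivAt_of_eventually_unique {𝕜 E : Type*}
    [NontriviallyNormedField 𝕜] [CompleteSpace 𝕜] [NormedAddCommGroup E] [NormedSpace 𝕜 E]
    [CompleteSpace E] {f : E × 𝕜 → 𝕜} {f' : E × 𝕜 →L[𝕜] 𝕜} {u : E → 𝕜} {x : E}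
    (hf : HasStrictFDerivAt f f' (x, u x)) (hf' : f' (0, 1) ≠ 0)
    (huniq : ∀ᶠ p in 𝓝 (x, u x), f p = f (x, u x) → u p.1 = p.2) :
    HasStrictFDerivAt u (-(f' (0, 1))⁻¹ • f'.comp (.inl 𝕜 E 𝕜)) x := by
  set e := ContinuousLinearEquiv.unitsEquivAut 𝕜 (Units.mk0 _ hf')
  have he : f'.comp (.inr 𝕜 E 𝕜) = e := by ext; simp [e]
  have hinv : (f'.comp (.inr 𝕜 E 𝕜)).IsInvertible := he ▸ ⟨e, rfl⟩
  set ψ := hf.implicitFunctionOfProdDomain hinv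
  have hgraph : Tendsto (fun y => (y, ψ y)) (𝓝 x) (𝓝 (x, u x)) :=
    tendsto_id.prodMk_nhds (hf.tendsto_implicitFunctionOfProdDomain hinv)
  have hψu : ψ =ᶠ[𝓝 x] u := by
    filter_upwards [hgraph.eventually huniq, hf.eventually_apply_implicitFunctionOfProdDomain hinv]
      with y hy hsol using (hy hsol).symm
  refine ((hf.hasStrictFDerivAt_implicitFunctionOfProdDomain hinv).congr_of_eventuallyEq
    hψu).congr_fderiv ?_
  ext h
  simp [he, ContinuousLinearMap.inverse_equiv, e, mul_comm]

theorem hasStrictFDerivAt_retardedTime {z : ℝ → Fin 4 → ℝ} {v₀ : Fin 4 → ℝ}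
    {u : (Fin 4 → ℝ) → ℝ} {x : Fin 4 → ℝ} (hz : HasStrictDerivAt z v₀ (u x))
    (hnull : mdot (x - z (u x)) (x - z (u x)) = 0) (hpast : z (u x) 0 < x 0)
    (huniq : ∀ y τ, mdot (y - z τ) (y - z τ) = 0 → z τ 0 ≤ y 0 → τ = u y)
    (hv₀ : mdot v₀ (x - z (u x)) ≠ 0) :
    HasStrictFDerivAt u ((mdot v₀ (x - z (u x)))⁻¹ • minkowskiForm (x - z (u x))) x := by
  have hsep : HasStrictFDerivAt (fun p : (Fin 4 → ℝ) × ℝ => p.1 - z p.2) _ (x, u x) :=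
    hasStrictFDerivAt_fst.sub (hz.hasStrictFDerivAt.comp (x, u x) hasStrictFDerivAt_snd)
  -- strict time ordering is open, so nearby null solutions are still retarded
  have hpast' : ∀ᶠ p in 𝓝 (x, u x), z p.2 0 < p.1 0 := by
    have hcont : ContinuousAt (fun p : (Fin 4 → ℝ) × ℝ => p.1 0 - z p.2 0) (x, u x) :=
      ((continuous_apply 0).comp continuous_fst).continuousAt.sub
        (((continuous_apply 0).continuousAt.comp hz.hasDerivAt.continuousAt).comp_of_eq
          continuous_snd.continuousAt rfl)
    filter_upwards [hcont.eventually (eventually_gt_nhds (sub_pos.2 hpast))] with p hp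
    exact sub_pos.1 hp
  refine ((hsep.mdot hsep).hasStrictFDerivAt_of_eventually_unique ?_ ?_).congr_fderiv ?_
  · simp [-map_sub, -minkowskiForm_apply]
    rwa [mdot_comm] at hv₀
  · filter_upwards [hpast'] with p hp hsol
    exact (huniq _ _ (hsol.trans hnull) hp.le).symm
  · ext h
    simp [-map_sub, -minkowskiForm_apply, mdot_comm v₀]
    rw [← minkowskiForm_apply]
    ring

section InvSmul

variable {E : Type*} [NormedAddCommGroup E] [NormedSpace ℝ E] {w : E → E} {r : E → ℝ}
  {Dw : E →L[ℝ] E} {Dr : E →L[ℝ] ℝ} {x : E}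

theorem HasFDerivAt.inv_smul (hw : HasFDerivAt w Dw x) (hr : HasFDerivAt r Dr x)
    (hx : r x ≠ 0) :
    HasFDerivAt (fun y => (r y)⁻¹ • w y)
      ((r x)⁻¹ • Dw - ((r x ^ 2)⁻¹ • Dr).smulRight (w x)) x :=
  (((hasDerivAt_inv hx).comp_hasFDerivAt x hr).smul hw).congr_fderiv <| by
    ext h; simp [sub_eq_add_neg]

theorem fderiv_inv_smul_apply_self (hw : HasFDerivAt w Dw x) (hr : HasFDerivAt r Dr x)
    (hx : r x ≠ 0) (hDw : Dw (w x) = w x) (hDr : Dr (w x) = r x) :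
    fderiv ℝ (fun y => (r y)⁻¹ • w y) x (w x) = 0 := by
  rw [(hw.inv_smul hr hx).fderiv]
  simp [hDw, hDr]
  field_simp
  simp

theorem trace_fderiv_inv_smul [FiniteDimensional ℝ E] (hw : HasFDerivAt w Dw x)
    (hr : HasFDerivAt r Dr x) (hx : r x ≠ 0) (hDr : Dr (w x) = r x) :
    LinearMap.trace ℝ E (fderiv ℝ (fun y => (r y)⁻¹ • w y) x) =
      (LinearMap.trace ℝ E Dw - 1) / r x := by
  rw [(hw.inv_smul hr hx).fderiv]
  simp [LinearMap.trace_smulRight, hDr]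
  field_simp

end InvSmul

section Coordinates

variable {ι : Type*} [Fintype ι] [DecidableEq ι] {k : (ι → ℝ) → ι → ℝ} {x : ι → ℝ}

theorem sum_mul_fderiv_apply_single (hk : DifferentiableAt ℝ k x) (c : ι → ℝ) (a : ι) :
    ∑ b, c b * fderiv ℝ (fun y => k y a) x (Pi.single b 1) = fderiv ℝ k x c a := by
  conv_rhs => rw [← Finset.univ_sum_single c]
  rw [fderiv_apply hk a, map_sum, Finset.sum_apply]
  refine Finset.sum_congr rfl fun b _ => ?_
  have hsingle : Pi.single b (c b) = c b • Pi.single b (1 : ℝ) := by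
    rw [← Pi.single_smul', smul_eq_mul, mul_one]
  simp [hsingle]

theorem sum_fderiv_apply_single_self (hk : DifferentiableAt ℝ k x) :
    ∑ a, fderiv ℝ (fun y => k y a) x (Pi.single a 1) =
      LinearMap.trace ℝ (ι → ℝ) (fderiv ℝ k x) := by
  rw [LinearMap.trace_eq_matrix_trace ℝ (Pi.basisFun ℝ ι), Matrix.trace]
  simp [fderiv_apply hk]

end Coordinates

theorem exists_hasFDerivAt_separation_distance {z v : ℝ → Fin 4 → ℝ} {a : Fin 4 → ℝ}
    {u : (Fin 4 → ℝ) → ℝ} {r : (Fin 4 → ℝ) → ℝ} {x : Fin 4 → ℝ}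
    (hz : HasStrictDerivAt z (v (u x)) (u x)) (hv : HasStrictDerivAt v a (u x))
    (hnull : mdot (x - z (u x)) (x - z (u x)) = 0) (hpast : z (u x) 0 ≤ x 0)
    (huniq : ∀ y τ, mdot (y - z τ) (y - z τ) = 0 → z τ 0 ≤ y 0 → τ = u y)
    (hr : ∀ y, r y = -mdot (v (u y)) (y - z (u y))) (hrx : r x ≠ 0) :
    ∃ (Dw : (Fin 4 → ℝ) →L[ℝ] Fin 4 → ℝ) (Dr : (Fin 4 → ℝ) →L[ℝ] ℝ),
      HasFDerivAt (fun y => y - z (u y)) Dw x ∧ HasFDerivAt r Dr x ∧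
      Dw (x - z (u x)) = x - z (u x) ∧ Dr (x - z (u x)) = r x ∧
      LinearMap.trace ℝ (Fin 4 → ℝ) Dw = 3 := by
  set w := x - z (u x)
  have hvw : mdot (v (u x)) w ≠ 0 := by rwa [hr, neg_ne_zero] at hrx
  have hw0 : z (u x) 0 < x 0 := by
    refine hpast.lt_of_ne fun h => hvw ?_
    rw [eq_zero_of_mdot_self_eq_zero_of_apply_zero hnull (by simp [w, h]), mdot_eq]
    simp
  have hdu := hasStrictFDerivAt_retardedTime hz hnull hw0 huniq hvw
  set du := (mdot (v (u x)) w)⁻¹ • minkowskiForm w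
  have hduw : du w = 0 := by simp [du, hnull]
  have hduv : du (v (u x)) = 1 := by simp [du, mdot_comm w, hvw]
  have hsep := (hasStrictFDerivAt_id x).sub (hz.hasStrictFDerivAt.comp x hdu)
  have hdist := ((hv.hasStrictFDerivAt.comp x hdu).mdot hsep).neg
  refine ⟨_, _, hsep.hasFDerivAt, (hdist.hasFDerivAt.congr_of_eventuallyEq
    (Eventually.of_forall hr)), ?_, ?_, ?_⟩
  · simp [hduw]
  · simp [-map_sub, -minkowskiForm_apply, hduw, hr, w]
    rfl
  · have hrank1 : LinearMap.toSpanSingleton ℝ _ (v (u x)) ∘ₗ (du : (Fin 4 → ℝ) →ₗ[ℝ] ℝ) =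
        (du : (Fin 4 → ℝ) →ₗ[ℝ] ℝ).smulRight (v (u x)) := rfl
    simp [hrank1, hduv]
    norm_num

theorem null_rays_geodesic_expansion_general
    (z : ℝ → Fin 4 → ℝ) (hz : ContDiff ℝ (⊤ : ℕ∞) z)
    (v : ℝ → Fin 4 → ℝ) (hv : ∀ τ i, v τ i = deriv (fun t => z t i) τ)
    (u : (Fin 4 → ℝ) → ℝ)
    (hu : ∀ x, mdot (x - z (u x)) (x - z (u x)) = 0 ∧ z (u x) 0 ≤ x 0)
    (huniq : ∀ x τ, mdot (x - z τ) (x - z τ) = 0 → z τ 0 ≤ x 0 → τ = u x)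
    (r : (Fin 4 → ℝ) → ℝ)
    (hr : ∀ x, r x = -mdot (v (u x)) (x - z (u x)))
    (k : (Fin 4 → ℝ) → Fin 4 → ℝ)
    (hk : ∀ x, k x = (r x)⁻¹ • (x - z (u x))) :
    ∀ x ∈ {x : Fin 4 → ℝ | 0 < r x},
      (∀ a : Fin 4, ∑ b, k x b * fderiv ℝ (fun y => k y a) x (Pi.single b 1) = 0) ∧
      ∑ a, fderiv ℝ (fun y => k y a) x (Pi.single a 1) = 2 / r x := by
  have hvz : v = deriv z := funext fun τ => funext fun i =>
    (hv τ i).trans (hasDerivAt_pi.1 (hz.differentiable (by simp) τ).hasDerivAt i).deriv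
  subst hvz
  have hz' : ContDiff ℝ (⊤ : ℕ∞) (deriv z) := (contDiff_infty_iff_deriv.1 hz).2
  intro x (hx : 0 < r x)
  obtain ⟨Dw, Dr, hDw, hDr, hDww, hDrw, htrace⟩ := exists_hasFDerivAt_separation_distance
    (hz.contDiffAt.hasStrictDerivAt (by simp)) (hz'.contDiffAt.hasStrictDerivAt (by simp))
    (hu x).1 (hu x).2 huniq hr hx.ne'
  have hkfun : k = fun y => (r y)⁻¹ • (y - z (u y)) := funext hk
  have hkd : DifferentiableAt ℝ k x := hkfun ▸ (hDw.inv_smul hDr hx.ne').differentiableAt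
  refine ⟨fun a => ?_, ?_⟩
  · rw [sum_mul_fderiv_apply_single hkd, hk x, map_smul, hkfun,
      fderiv_inv_smul_apply_self hDw hDr hx.ne' hDww hDrw, smul_zero, Pi.zero_apply]
  · rw [sum_fderiv_apply_single_self hkd, hkfun, trace_fderiv_inv_smul hDw hDr hx.ne' hDrw,
      htrace]
    norm_num

/-- On Ω = {x | r x > 0} the integral curves of `k` are geodesics with affine
parameter `r` (`k^b ∂_b k^a = 0`) and expansion `2/r` (`∂_a k^a = 2/r`). -/
theorem null_rays_geodesic_expansion
    (z : ℝ → Fin 4 → ℝ) (hz : ContDiff ℝ (⊤ : ℕ∞) z)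
    (v : ℝ → Fin 4 → ℝ) (hv : ∀ τ i, v τ i = deriv (fun t => z t i) τ)
    (hunit : ∀ τ, mdot (v τ) (v τ) = -1)
    (hfut : ∀ τ, 0 < v τ 0)
    (u : (Fin 4 → ℝ) → ℝ)
    (hu : ∀ x, mdot (x - z (u x)) (x - z (u x)) = 0 ∧ z (u x) 0 ≤ x 0)
    (huniq : ∀ x τ, mdot (x - z τ) (x - z τ) = 0 → z τ 0 ≤ x 0 → τ = u x)
    (r : (Fin 4 → ℝ) → ℝ)
    (hr : ∀ x, r x = -mdot (v (u x)) (x - z (u x)))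
    (k : (Fin 4 → ℝ) → Fin 4 → ℝ)
    (hk : ∀ x, k x = (r x)⁻¹ • (x - z (u x))) :
    ∀ x ∈ {x : Fin 4 → ℝ | 0 < r x},
      (∀ a : Fin 4, ∑ b, k x b * fderiv ℝ (fun y => k y a) x (Pi.single b 1) = 0) ∧
      ∑ a, fderiv ℝ (fun y => k y a) x (Pi.single a 1) = 2 / r x :=
  null_rays_geodesic_expansion_general z hz v hv u hu huniq r hr k hk
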